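/- arXiv:1301.6441 — 3 statements merged into one kernel-verified Lean document; each statement's English description precedes it below -/
import Mathlib

section
/- Let b ≥ 2 be an integer and α, d, s ∈ ℕ. Let ∅ ≠ u ⊆ {1,...,ds} and for each j ∈ u let l_j ≥ 1 be an integer. For 1 ≤ i ≤ s set u_i = u ∩ {(i-1)d+1,...,id}, let v(u) = {i : u_i ≠ ∅}, and α_i = min(α, |u_i|). For j ∈ u_i define β'_j = (b-1) b^{-(j-(i-1)d) - (l_j - 1)d}; these values are pairwise distinct within each block, and for each i ∈ v(u) let β_{i,1} < β_{i,2} < ⋯ < β_{i,|u_i|} be the elements of {β'_j : j ∈ u_i} listed in increasing order. Define β(l_u, 0) = Π_{i∈v(u)} Π_{j=1}^{α_i} β_{i,j}. Then β(l_u, 0) ≤ Π_{j∈u} b^{-min(α,d)(l_j - 1)}. -/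
open scoped Classical
open Polynomial

noncomputable section

namespace ISPLR

/-- `digit b k i` is the `i`-th base-`b` digit of `k`. -/
def digit (b k i : ℕ) : ℕ := k / b ^ i % b

/-- `trunc b m k` is the truncated polynomial `tr_m(k) ∈ F_b[x]`. -/
def trunc (b m k : ℕ) : Polynomial (ZMod b) :=
  ∑ i ∈ Finset.range m, Polynomial.C ((digit b k i : ZMod b)) * Polynomial.X ^ i

/-- `mu b k = ⌊log_b k⌋` for `k ≥ 1`. -/
def mu (b k : ℕ) : ℕ := Nat.log b k

/-- `r_{α,d}(k)`. -/
def rfun (b α d k : ℕ) : ℝ :=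
  if k = 0 then 1 else (b : ℝ) ^ (-(((2 * min α d + 1) * mu b k : ℕ) : ℤ))

/-- `blk d u = v(u)`: the set of coordinates `i` whose block `{(i-1)d+1,...,id}` meets `u`. -/
def blk (d : ℕ) (u : Finset ℕ) : Finset ℕ := u.image fun j => (j - 1) / d + 1

/-- The quality criterion `B_{α,d,γ}((q_1,...,q_τ), p)`. -/
def Bcrit (b α d m : ℕ) (γ : Finset ℕ → ℝ) (p : Polynomial (ZMod b))
    (τ : ℕ) (q : ℕ → Polynomial (ZMod b)) : ℝ :=
  ∑ u ∈ (Finset.Icc 1 τ).powerset.filter fun u => u ≠ ∅,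
    (4 : ℝ) ^ ((blk d u).card * (d - α)) * γ (blk d u) *
      ∑' k : ↥u → ℕ,
        (if (∀ j, 1 ≤ k j) ∧ p ∣ ∑ j, trunc b m (k j) * q (j : ℕ)
         then ∏ j, rfun b α d (k j) else 0)

/-- Membership in `R_{b,m}`: nonzero polynomials of degree `< m`. -/
def Rbm (b m : ℕ) (q : Polynomial (ZMod b)) : Prop :=
  q ≠ 0 ∧ q.degree < (m : WithBot ℕ)

/-- `R_{b,m}` as a finset. -/
def Rfin (b m : ℕ) : Finset (Polynomial (ZMod b)) :=
  ((Finset.range (b ^ m)).filter fun n => n ≠ 0).image (trunc b m)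

/-- The CBC construction: `q 1 = 1`, every component lies in `R_{b,m}`, and each `q τ`
minimizes the quality criterion given the previous components. -/
def CBC (b α d m ds : ℕ) (γ : Finset ℕ → ℝ) (p : Polynomial (ZMod b))
    (q : ℕ → Polynomial (ZMod b)) : Prop :=
  q 1 = 1 ∧ (∀ τ, 1 ≤ τ → τ ≤ ds → Rbm b m (q τ)) ∧
    ∀ τ, 2 ≤ τ → τ ≤ ds → ∀ q' : Polynomial (ZMod b), Rbm b m q' →
      Bcrit b α d m γ p τ q ≤ Bcrit b α d m γ p τ (Function.update q τ q')

/-- `C̃_{α,d,λ}`. -/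
def Ctilde (b α d : ℕ) (lam : ℝ) : ℝ :=
  max ((((b : ℝ) - 1) / (1 - (b : ℝ) ^ (-(2 * ((min α d : ℕ) : ℤ))))) ^ lam)
      (((b : ℝ) - 1) / (1 - (b : ℝ) ^ ((1 : ℝ) - (2 * ((min α d : ℕ) : ℝ) + 1) * lam)))

/-- `C_{α,d,λ,a}`. -/
def Cconst (b α d : ℕ) (lam : ℝ) (a : ℕ) : ℝ :=
  (4 : ℝ) ^ (lam * ((d - α : ℕ) : ℝ)) * (-1 + (1 + Ctilde b α d lam) ^ a)

/-- `φ_{α,d}(z)`. -/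
def phi (b α d : ℕ) (z : ℝ) : ℝ :=
  if z = 0 then ((b : ℝ) - 1) / (1 - (b : ℝ) ^ (-(2 * ((min α d : ℕ) : ℤ))))
  else ((b : ℝ) - 1 - (b : ℝ) ^ (2 * ((min α d : ℕ) : ℤ) * ⌊Real.logb b z⌋) *
      ((b : ℝ) ^ (2 * min α d + 1) - 1)) /
    (1 - (b : ℝ) ^ (-(2 * ((min α d : ℕ) : ℤ))))

/-- The `l`-th coefficient `t_l` of the Laurent expansion `g/p = Σ_{l} t_l x^{-l}`
(for `l ≥ 1`; the coefficients with `l ≥ 1` only depend on `g % p`, and are obtained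
as power-series coefficients after the substitution `y = x^{-1}`). -/
def lcoeff (b : ℕ) [Fact (Nat.Prime b)] (m : ℕ) (p g : Polynomial (ZMod b)) (l : ℕ) : ZMod b :=
  PowerSeries.coeff (R := ZMod b) l
    (PowerSeries.X * (((g % p).reflect (m - 1) : Polynomial (ZMod b)) : PowerSeries (ZMod b)) *
      (((p.reflect m : Polynomial (ZMod b)) : PowerSeries (ZMod b)))⁻¹)

/-- `v_m(g/p) = Σ_{l=1}^m t_l b^{-l}`. -/
def vmap (b : ℕ) [Fact (Nat.Prime b)] (m : ℕ) (p g : Polynomial (ZMod b)) : ℝ :=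
  ∑ l ∈ Finset.Icc 1 m, ((lcoeff b m p g l).val : ℝ) / (b : ℝ) ^ l

/-- The `j`-th coordinate `z_{n,j} = v_m(n(x) q_j(x)/p(x))` of the `n`-th point of the
polynomial lattice point set with modulus `p` and generating polynomial `qj`. -/
def plp (b : ℕ) [Fact (Nat.Prime b)] (m : ℕ) (p qj : Polynomial (ZMod b)) (n : ℕ) : ℝ :=
  vmap b m p (trunc b m n * qj)

/-- The `i`-th base-`b` digit (for `i ≥ 1`) of a real number `x ∈ [0,1)`, taken from the
expansion in which infinitely many digits differ from `b - 1`. -/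
def rdigit (b : ℕ) (x : ℝ) (i : ℕ) : ℕ := (⌊x * (b : ℝ) ^ i⌋.toNat) % b

/-- The `k`-th base-`b` Walsh function. -/
def walsh (b k : ℕ) (x : ℝ) : ℂ :=
  Complex.exp (2 * (Real.pi : ℂ) * Complex.I *
    (((∑ a ∈ Finset.range (Nat.log b k + 1), rdigit b x (a + 1) * digit b k a : ℕ)) : ℂ) / (b : ℂ))

/-- `θ(q̃)`: the part of the quality criterion involving the new component `q̃` at index `τ+1`. -/
def theta (b α d m τ : ℕ) (γ : Finset ℕ → ℝ) (p : Polynomial (ZMod b))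
    (q : ℕ → Polynomial (ZMod b)) (qt : Polynomial (ZMod b)) : ℝ :=
  ∑ u ∈ (Finset.Icc 1 τ).powerset,
    (4 : ℝ) ^ ((blk d (insert (τ + 1) u)).card * (d - α)) * γ (blk d (insert (τ + 1) u)) *
      ∑' kk : (↥u → ℕ) × ℕ,
        (if (∀ j, 1 ≤ kk.1 j) ∧ 1 ≤ kk.2 ∧
            p ∣ ((∑ j, trunc b m (kk.1 j) * q (j : ℕ)) + trunc b m kk.2 * qt)
         then (∏ j, rfun b α d (kk.1 j)) * rfun b α d kk.2 else 0)

/-!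
Within the `i`-th block, `β'_j = (b-1) b^{-e_j}` where `e_j - 1 ≡ j - (i-1)d - 1 (mod d)`, so the
`β'_j` are distinct. The product of the `α_i` smallest of them is at most the product over
any `α_i` of them; take the indices with the largest `l_j` and use `β'_j ≤ b^{-(l_j-1)d}`. The
`α_i` largest of the numbers `l_j - 1` carry at least the fraction `α_i/|u_i|` of their total, and
`d α_i / |u_i| ≥ min(α, d)` because `|u_i| ≤ d`.
-/

end ISPLR

namespace Finset

variable {ι R : Type*}

theorem prod_take_sort_le_prod_of_subset [CommSemiring R] [LinearOrder R] [IsOrderedRing R]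
    {F G : Finset R} (hF : ∀ x ∈ F, 0 ≤ x) (hGF : G ⊆ F) :
    ((F.sort (· ≤ ·)).take G.card).prod ≤ ∏ x ∈ G, x := by
  induction F using Finset.induction_on_min generalizing G with
  | empty => simp [subset_empty.mp hGF]
  | insert x F hx ih =>
    rcases G.eq_empty_or_nonempty with rfl | hG
    · simp
    have hxF : x ∉ F := fun h => lt_irrefl x (hx x h)
    obtain ⟨y, hyG, hxy, hyF⟩ : ∃ y ∈ G, x ≤ y ∧ G.erase y ⊆ F := by
      by_cases hxG : x ∈ G
      · refine ⟨x, hxG, le_rfl, fun z hz => ?_⟩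
        exact (mem_insert.mp (hGF (mem_of_mem_erase hz))).resolve_left (ne_of_mem_erase hz)
      · obtain ⟨y, hy⟩ := hG
        refine ⟨y, hy, ?_, (erase_subset y G).trans fun z hz => ?_⟩
        · rcases mem_insert.mp (hGF hy) with rfl | hyF
          · exact le_rfl
          · exact (hx y hyF).le
        · exact (mem_insert.mp (hGF hz)).resolve_left fun h => hxG (h ▸ hz)
    have hF' : ∀ z ∈ F, 0 ≤ z := fun z hz => hF z (mem_insert_of_mem hz)
    rw [sort_insert _ (fun z hz => (hx z hz).le) hxF, ← mul_prod_erase G (fun z => z) hyG,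
      ← card_erase_add_one hyG, List.take_succ_cons, List.prod_cons]
    exact mul_le_mul hxy (ih hF' hyF)
      (List.prod_nonneg fun z hz => hF' z ((mem_sort _).mp (List.mem_of_mem_take hz)))
      (hF y (hGF hyG))

theorem exists_subset_card_eq_forall_sdiff_le [LinearOrder R] (S : Finset ι) (g : ι → R)
    {a : ℕ} (ha : a ≤ S.card) :
    ∃ H ⊆ S, H.card = a ∧ ∀ x ∈ H, ∀ y ∈ S \ H, g y ≤ g x := by
  induction a with
  | zero => exact ⟨∅, empty_subset _, card_empty, by simp⟩
  | succ a ih =>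
    obtain ⟨H, hHS, hcard, htop⟩ := ih (Nat.le_of_succ_le ha)
    have hne : (S \ H).Nonempty := by
      rw [← card_pos, card_sdiff_of_subset hHS]
      omega
    obtain ⟨x, hx, hmax⟩ := exists_max_image (S \ H) g hne
    have hxH : x ∉ H := (mem_sdiff.mp hx).2
    refine ⟨insert x H, insert_subset (mem_sdiff.mp hx).1 hHS,
      by rw [card_insert_of_notMem hxH, hcard], fun z hz y hy => ?_⟩
    have hy' : y ∈ S \ H :=
      mem_sdiff.mpr ⟨(mem_sdiff.mp hy).1, fun h => (mem_sdiff.mp hy).2 (mem_insert_of_mem h)⟩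
    rcases mem_insert.mp hz with rfl | hzH
    · exact hmax y hy'
    · exact htop z hzH y hy'

theorem card_mul_sum_le_card_mul_sum_of_forall_sdiff_le [CommSemiring R] [PartialOrder R]
    [IsOrderedRing R] {S H : Finset ι} {g : ι → R} (hHS : H ⊆ S)
    (htop : ∀ x ∈ H, ∀ y ∈ S \ H, g y ≤ g x) :
    (H.card : R) * ∑ j ∈ S, g j ≤ S.card * ∑ j ∈ H, g j := by
  have hbound : ∀ y ∈ S \ H, (H.card : R) * g y ≤ ∑ j ∈ H, g j := fun y hy => by
    simpa using card_nsmul_le_sum H g (g y) fun x hx => htop x hx y hy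
  calc (H.card : R) * ∑ j ∈ S, g j
      = H.card * ∑ j ∈ H, g j + ∑ y ∈ S \ H, H.card * g y := by
        rw [← sum_sdiff hHS, mul_add, mul_sum, add_comm]
    _ ≤ H.card * ∑ j ∈ H, g j + ∑ _y ∈ S \ H, ∑ j ∈ H, g j := by
        gcongr with y hy
        exact hbound y hy
    _ = S.card * ∑ j ∈ H, g j := by
        rw [sum_const, card_sdiff_of_subset hHS, nsmul_eq_mul, ← add_mul, ← Nat.cast_add,
          Nat.add_sub_cancel' (card_le_card hHS)]

theorem exists_subset_card_eq_min_and_min_mul_sum_le (α : ℕ) {d : ℕ}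
    {S : Finset ι} (hS : S.card ≤ d) (g : ι → ℕ) :
    ∃ H ⊆ S, H.card = min α S.card ∧
      min α d * ∑ j ∈ S, g j ≤ d * ∑ j ∈ H, g j := by
  obtain ⟨H, hHS, hcard, htop⟩ :=
    S.exists_subset_card_eq_forall_sdiff_le g (min_le_right α S.card)
  refine ⟨H, hHS, hcard, ?_⟩
  have havg : H.card * ∑ j ∈ S, g j ≤ S.card * ∑ j ∈ H, g j := by
    exact_mod_cast card_mul_sum_le_card_mul_sum_of_forall_sdiff_le hHS htop
  have hmin : min α d * S.card ≤ H.card * d := by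
    rw [hcard]
    rcases le_total α S.card with h | h
    · rw [min_eq_left h]; exact Nat.mul_le_mul (min_le_left α d) hS
    · rw [min_eq_right h, mul_comm]; exact Nat.mul_le_mul_left _ (min_le_right α d)
  rcases Nat.eq_zero_or_pos H.card with h0 | hpos
  · rcases Nat.min_eq_zero_iff.mp (hcard ▸ h0) with hα | hS0
    · simp [hα]
    · simp [card_eq_zero.mp hS0]
  refine Nat.le_of_mul_le_mul_left ?_ hpos
  calc H.card * (min α d * ∑ j ∈ S, g j) = min α d * (H.card * ∑ j ∈ S, g j) := by ring
    _ ≤ min α d * (S.card * ∑ j ∈ H, g j) := Nat.mul_le_mul_left _ havg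
    _ = min α d * S.card * ∑ j ∈ H, g j := by ring
    _ ≤ H.card * d * ∑ j ∈ H, g j := Nat.mul_le_mul_right _ hmin
    _ = H.card * (d * ∑ j ∈ H, g j) := by ring

end Finset

namespace ISPLR

open Finset

/-- The paper's `β'_j` for `j` in the block `{c+1, ..., c+d}`, where `c = (i-1)d`. -/
def betaWeight (b d c : ℕ) (l : ℕ → ℕ) (j : ℕ) : ℝ :=
  ((b : ℝ) - 1) * (b : ℝ) ^ (-(((j - c) + (l j - 1) * d : ℕ) : ℤ))

variable {b d c : ℕ} {l : ℕ → ℕ}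

theorem betaWeight_eq (j : ℕ) :
    betaWeight b d c l j = ((b : ℝ) - 1) * ((b : ℝ)⁻¹) ^ ((j - c) + (l j - 1) * d) := by
  rw [betaWeight, zpow_neg, zpow_natCast, inv_pow]

theorem betaWeight_pos (hb : 2 ≤ b) (j : ℕ) : 0 < betaWeight b d c l j := by
  have hb' : (2 : ℝ) ≤ b := by exact_mod_cast hb
  rw [betaWeight_eq]
  exact mul_pos (by linarith) (pow_pos (inv_pos.mpr (by linarith)) _)

theorem betaWeight_le (hb : 1 ≤ b) {j : ℕ} (hj : c < j) :
    betaWeight b d c l j ≤ ((b : ℝ)⁻¹) ^ ((l j - 1) * d) := by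
  have hb' : (1 : ℝ) ≤ b := by exact_mod_cast hb
  have hx0 : 0 ≤ (b : ℝ)⁻¹ := inv_nonneg.mpr (by linarith)
  have hlead : ((b : ℝ) - 1) * (b : ℝ)⁻¹ ≤ 1 := by
    rw [sub_mul, mul_inv_cancel₀ (by positivity)]
    linarith
  obtain ⟨o, ho⟩ : ∃ o, j - c = o + 1 := ⟨j - c - 1, by omega⟩
  rw [betaWeight_eq, ho]
  calc ((b : ℝ) - 1) * (b : ℝ)⁻¹ ^ (o + 1 + (l j - 1) * d)
      = ((b : ℝ) - 1) * (b : ℝ)⁻¹ * (b : ℝ)⁻¹ ^ o * (b : ℝ)⁻¹ ^ ((l j - 1) * d) := by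
        ring
    _ ≤ 1 * 1 * (b : ℝ)⁻¹ ^ ((l j - 1) * d) := by
        gcongr
        exact pow_le_one₀ hx0 (inv_le_one_of_one_le₀ hb')
    _ = (b : ℝ)⁻¹ ^ ((l j - 1) * d) := by ring

theorem betaWeight_injOn (hb : 2 ≤ b) :
    Set.InjOn (betaWeight b d c l) (Icc (c + 1) (c + d)) := by
  intro j hj j' hj' h
  rw [coe_Icc, Set.mem_Icc] at hj hj'
  have hb' : (1 : ℝ) < b := by exact_mod_cast hb
  rw [betaWeight_eq, betaWeight_eq] at h
  have hexp : j - c + (l j - 1) * d = j' - c + (l j' - 1) * d :=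
    pow_right_injective₀ (inv_pos.mpr (by linarith)) (inv_ne_one.mpr hb'.ne')
      (mul_left_cancel₀ (sub_ne_zero.mpr hb'.ne') h)
  -- the offsets `j - c - 1 < d` are the residues of the exponents minus one modulo `d`
  have hmod : ∀ {o p : ℕ}, o < d → (o + p * d) % d = o := fun ho => by
    rw [Nat.add_mul_mod_self_right, Nat.mod_eq_of_lt ho]
  have hres : (j - c - 1 + (l j - 1) * d) % d = (j' - c - 1 + (l j' - 1) * d) % d := by
    congr 1
    omega
  rw [hmod (by omega), hmod (by omega)] at hres
  omega

theorem prod_take_sort_betaWeight_le (hb : 2 ≤ b) (α : ℕ) {S : Finset ℕ}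
    (hS : S ⊆ Icc (c + 1) (c + d)) :
    (((S.image (betaWeight b d c l)).sort (· ≤ ·)).take (min α S.card)).prod ≤
      ∏ j ∈ S, (b : ℝ) ^ (-((min α d * (l j - 1) : ℕ) : ℤ)) := by
  have hcard : S.card ≤ d := by simpa using card_le_card hS
  obtain ⟨H, hHS, hHcard, hsum⟩ :=
    exists_subset_card_eq_min_and_min_mul_sum_le α hcard (l · - 1)
  have hinj : Set.InjOn (betaWeight b d c l) H :=
    (betaWeight_injOn hb).mono (coe_subset.2 (hHS.trans hS))
  have hx0 : 0 ≤ (b : ℝ)⁻¹ := by positivity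
  have hx1 : (b : ℝ)⁻¹ ≤ 1 := inv_le_one_of_one_le₀ (by exact_mod_cast hb.trans' one_le_two)
  have hpos : ∀ y ∈ S.image (betaWeight b d c l), 0 ≤ y := by
    simp only [mem_image]
    rintro _ ⟨j, -, rfl⟩
    exact (betaWeight_pos hb j).le
  rw [← hHcard, ← card_image_of_injOn hinj]
  calc _ ≤ ∏ y ∈ H.image (betaWeight b d c l), y :=
        prod_take_sort_le_prod_of_subset hpos (image_subset_image hHS)
    _ = ∏ j ∈ H, betaWeight b d c l j := prod_image hinj
    _ ≤ ∏ j ∈ H, (b : ℝ)⁻¹ ^ ((l j - 1) * d) :=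
        prod_le_prod (fun j _ => (betaWeight_pos hb j).le)
          (fun j hj => betaWeight_le (by omega) (mem_Icc.mp (hS (hHS hj))).1)
    _ = (b : ℝ)⁻¹ ^ (d * ∑ j ∈ H, (l j - 1)) := by
        rw [prod_pow_eq_pow_sum, ← sum_mul, mul_comm]
    _ ≤ (b : ℝ)⁻¹ ^ (min α d * ∑ j ∈ S, (l j - 1)) := pow_le_pow_of_le_one hx0 hx1 hsum
    _ = ∏ j ∈ S, (b : ℝ) ^ (-((min α d * (l j - 1) : ℕ) : ℤ)) := by
        simp only [zpow_neg, zpow_natCast, ← inv_pow, mul_sum, prod_pow_eq_pow_sum]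

theorem block_index_eq_iff (hd : 0 < d) {i j : ℕ} (hj : 1 ≤ j) :
    (j - 1) / d + 1 = i ↔ j ∈ Icc ((i - 1) * d + 1) (i * d) := by
  rw [mem_Icc]
  rcases i with _ | i
  · simp only [Nat.succ_ne_zero, false_iff, Nat.zero_sub, zero_mul]
    omega
  · rw [Nat.add_right_cancel_iff, Nat.div_eq_iff hd, Nat.add_sub_cancel, Nat.succ_mul]
    omega

theorem prod_blk_eq {M : Type*} [CommMonoid M] (hd : 0 < d) {u : Finset ℕ}
    (hu : ∀ j ∈ u, 1 ≤ j) (g : ℕ → M) :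
    ∏ i ∈ blk d u, ∏ j ∈ u ∩ Icc ((i - 1) * d + 1) (i * d), g j = ∏ j ∈ u, g j := by
  rw [← prod_fiberwise_of_maps_to (s := u) (t := blk d u) (g := fun j => (j - 1) / d + 1)
    (fun j hj => mem_image_of_mem _ hj)]
  refine prod_congr rfl fun i _ => prod_congr ?_ fun _ _ => rfl
  ext j
  simp only [mem_inter, mem_filter]
  exact and_congr_right fun hj => (block_index_eq_iff hd (hu j hj)).symm

theorem statement8_general (b : ℕ) (hb : 2 ≤ b) (α d s : ℕ) (hd : 1 ≤ d)
    (u : Finset ℕ) (husub : u ⊆ Finset.Icc 1 (d * s))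
    (l : ℕ → ℕ) :
    (∀ i ∈ blk d u, ∀ j ∈ u ∩ Finset.Icc ((i - 1) * d + 1) (i * d),
        ∀ j' ∈ u ∩ Finset.Icc ((i - 1) * d + 1) (i * d), j ≠ j' →
          ((b : ℝ) - 1) * (b : ℝ) ^ (-(((j - (i - 1) * d) + (l j - 1) * d : ℕ) : ℤ)) ≠
            ((b : ℝ) - 1) * (b : ℝ) ^ (-(((j' - (i - 1) * d) + (l j' - 1) * d : ℕ) : ℤ))) ∧
    ∏ i ∈ blk d u,
        ((((u ∩ Finset.Icc ((i - 1) * d + 1) (i * d)).image fun j =>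
              ((b : ℝ) - 1) * (b : ℝ) ^ (-(((j - (i - 1) * d) + (l j - 1) * d : ℕ) : ℤ))).sort
            (· ≤ ·)).take
          (min α (u ∩ Finset.Icc ((i - 1) * d + 1) (i * d)).card)).prod ≤
      ∏ j ∈ u, (b : ℝ) ^ (-((min α d * (l j - 1) : ℕ) : ℤ)) := by
  have hblock : ∀ i,
      u ∩ Icc ((i - 1) * d + 1) (i * d) ⊆ Icc ((i - 1) * d + 1) ((i - 1) * d + d) := fun i =>
    inter_subset_right.trans (Icc_subset_Icc le_rfl (by rw [← Nat.succ_mul]; gcongr; omega))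
  refine ⟨fun i _ j hj j' hj' hne =>
    (betaWeight_injOn hb).ne (hblock i hj) (hblock i hj') hne, ?_⟩
  rw [← prod_blk_eq hd fun j hj => (mem_Icc.mp (husub hj)).1]
  refine prod_le_prod (fun i _ => List.prod_nonneg fun x hx => ?_)
    fun i _ => prod_take_sort_betaWeight_le hb α (hblock i)
  obtain ⟨j, -, rfl⟩ := mem_image.mp ((mem_sort _).mp (List.mem_of_mem_take hx))
  exact (betaWeight_pos hb j).le

theorem statement8 (b : ℕ) (hb : 2 ≤ b) (α d s : ℕ) (hα : 1 ≤ α) (hd : 1 ≤ d) (hs : 1 ≤ s)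
    (u : Finset ℕ) (hune : u ≠ ∅) (husub : u ⊆ Finset.Icc 1 (d * s))
    (l : ℕ → ℕ) (hl : ∀ j ∈ u, 1 ≤ l j) :
    (∀ i ∈ blk d u, ∀ j ∈ u ∩ Finset.Icc ((i - 1) * d + 1) (i * d),
        ∀ j' ∈ u ∩ Finset.Icc ((i - 1) * d + 1) (i * d), j ≠ j' →
          ((b : ℝ) - 1) * (b : ℝ) ^ (-(((j - (i - 1) * d) + (l j - 1) * d : ℕ) : ℤ)) ≠
            ((b : ℝ) - 1) * (b : ℝ) ^ (-(((j' - (i - 1) * d) + (l j' - 1) * d : ℕ) : ℤ))) ∧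
    ∏ i ∈ blk d u,
        ((((u ∩ Finset.Icc ((i - 1) * d + 1) (i * d)).image fun j =>
              ((b : ℝ) - 1) * (b : ℝ) ^ (-(((j - (i - 1) * d) + (l j - 1) * d : ℕ) : ℤ))).sort
            (· ≤ ·)).take
          (min α (u ∩ Finset.Icc ((i - 1) * d + 1) (i * d)).card)).prod ≤
      ∏ j ∈ u, (b : ℝ) ^ (-((min α d * (l j - 1) : ℕ) : ℤ)) :=
  statement8_general b hb α d s hd u husub l

end ISPLR
end
end

section
/- Let b be a prime, m ∈ ℕ, p ∈ F_b[x] irreducible with deg(p) = m, a ≥ 1 an integer, and λ a real with 1/(2a+1) < λ ≤ 1. Let u be a finite index set and (q_j)_{j∈u} ∈ (F_b[x])^u be arbitrary fixed polynomials. Then (1/(b^m - 1)) Σ_{q̃ ∈ R_{b,m}} Σ over all ((k_j)_{j∈u}, k) ∈ ℕ^u × ℕ with Σ_{j∈u} tr_m(k_j) q_j + tr_m(k) q̃ ≡ 0 (mod p) of [Π_{j∈u} b^{-(2a+1)λ μ(k_j)}] · b^{-(2a+1)λ μ(k)} is at most [(b-1)/((b^m - 1)(1 - b^{1-(2a+1)λ}))]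 · [(b-1)/(1 - b^{1-(2a+1)λ})]^{|u|}. -/
/-!
Put `c = (2a+1)λ > 1` and `r = b ^ (-c)`, so that `b r < 1` and every factor of the summand is
`r ^ μ(k)`. Since exactly `(b-1) b^g` integers have `μ(k) = g`, the series `∑_{k ≥ 1} r ^ μ(k)`
is the geometric series `(b-1) ∑_g (b r)^g = (b-1)/(1 - b^(1-c))`.

Fix `(k_j)` and put `S = ∑_j tr_m(k_j) q_j`; we sum over `q̃` first. As `p` is prime and every
`q̃ ∈ R_{b,m}` is a nonzero polynomial of degree `< m = deg p`: if `p ∤ S`, each `k` admits at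
most one `q̃` with `p ∣ S + tr_m(k) q̃`; if `p ∣ S`, only the `k` with `tr_m(k) = 0`, i.e.
`b^m ∣ k`, admit any `q̃`, at most `b^m - 1` of them, and the weights of these `k` add up to at most
`r^m` times the full series, with `(b^m - 1) r^m ≤ (b r)^m ≤ 1`. Either way the sum over `q̃` and
`k` is at most `(b-1)/(1 - b^(1-c))`, and the remaining sum over `(k_j)` factorises into `|u|`
copies of the same series.
-/

open scoped Classical
open Polynomial

noncomputable section

namespace ISPLR

section Digits

lemma mod_pow_eq_zero_iff_digit_eq_zero {b : ℕ} (hb : 0 < b) (k m : ℕ) :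
    k % b ^ m = 0 ↔ ∀ i < m, digit b k i = 0 := by
  induction m with
  | zero => simp [Nat.mod_one]
  | succ m ih =>
    rw [Nat.mod_pow_succ, Nat.add_eq_zero_iff, mul_eq_zero, ih, Nat.forall_lt_succ_right]
    simp [digit, hb.ne']

lemma coeff_trunc (b m k n : ℕ) :
    (trunc b m k).coeff n = if n < m then (digit b k n : ZMod b) else 0 := by
  simp [trunc, Polynomial.coeff_X_pow]

lemma degree_trunc_lt (b m k : ℕ) : (trunc b m k).degree < m := by
  rw [Polynomial.degree_lt_iff_coeff_zero]
  intro n hn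
  rw [coeff_trunc, if_neg (by omega)]

lemma trunc_eq_zero_iff {b : ℕ} (hb : 0 < b) (m k : ℕ) : trunc b m k = 0 ↔ b ^ m ∣ k := by
  have hdigit (i : ℕ) : (digit b k i : ZMod b) = 0 ↔ digit b k i = 0 := by
    rw [ZMod.natCast_eq_zero_iff]
    exact ⟨fun h => Nat.eq_zero_of_dvd_of_lt h (Nat.mod_lt _ hb), fun h => h ▸ dvd_zero b⟩
  rw [Nat.dvd_iff_mod_eq_zero, mod_pow_eq_zero_iff_digit_eq_zero hb, Polynomial.ext_iff]
  refine forall_congr' fun i => ?_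
  by_cases hi : i < m <;> simp [coeff_trunc, hi, hdigit]

lemma ne_zero_and_degree_lt_of_mem_Rfin {b m : ℕ} (hb : 0 < b) {q : Polynomial (ZMod b)}
    (hq : q ∈ Rfin b m) : q ≠ 0 ∧ q.degree < m := by
  obtain ⟨k, hk, rfl⟩ := Finset.mem_image.mp hq
  rw [Finset.mem_filter, Finset.mem_range] at hk
  refine ⟨fun h => ?_, degree_trunc_lt b m k⟩
  exact hk.2 (Nat.eq_zero_of_dvd_of_lt ((trunc_eq_zero_iff hb m k).mp h) hk.1)

lemma card_Rfin_le (b m : ℕ) : (Rfin b m).card ≤ b ^ m - 1 := by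
  refine Finset.card_image_le.trans ?_
  rw [Finset.filter_ne', Finset.card_erase_eq_ite, Finset.card_range]
  split_ifs with h
  · rfl
  · rw [Finset.mem_range, Nat.pos_iff_ne_zero, not_not] at h
    omega

end Digits

section Divisibility

variable {K : Type*} [Field K] {p S t : K[X]}

lemma card_filter_dvd_add_mul_le_one (hp : Prime p) (hS : ¬ p ∣ S) {R : Finset K[X]}
    (hR : ∀ q ∈ R, q.degree < p.degree) : (R.filter fun q => p ∣ S + t * q).card ≤ 1 := by
  refine Finset.card_le_one.mpr fun q₁ h₁ q₂ h₂ => ?_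
  rw [Finset.mem_filter] at h₁ h₂
  have hdiff : p ∣ t * (q₁ - q₂) := by
    simpa [mul_sub] using dvd_sub h₁.2 h₂.2
  rcases hp.dvd_or_dvd hdiff with ht | hq
  · exact absurd ((dvd_add_left (dvd_mul_of_dvd_left ht q₁)).mp h₁.2) hS
  · have hdeg : (q₁ - q₂).degree < p.degree :=
      (Polynomial.degree_sub_le q₁ q₂).trans_lt (max_lt (hR q₁ h₁.1) (hR q₂ h₂.1))
    exact sub_eq_zero.mp (Polynomial.eq_zero_of_dvd_of_degree_lt hq hdeg)

lemma not_dvd_add_mul (hp : Prime p) (hS : p ∣ S) (ht : ¬ p ∣ t) {q : K[X]} (hq : q ≠ 0)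
    (hqp : q.degree < p.degree) : ¬ p ∣ S + t * q := fun h =>
  Polynomial.not_dvd_of_degree_lt hq hqp
    ((hp.dvd_or_dvd ((dvd_add_right hS).mp h)).resolve_left ht)

end Divisibility

/-- With `r = b ^ (-(2a+1)λ)` this is the factor `b ^ (-(2a+1)λ μ(k))` of the summand; the value
`0` at `k = 0` encodes the constraint `k ≥ 1`. -/
def weight (b : ℕ) (r : ℝ) (k : ℕ) : ℝ := if k = 0 then 0 else r ^ Nat.log b k

section Weight

variable {b : ℕ} {r : ℝ}

lemma weight_nonneg (hr : 0 ≤ r) (k : ℕ) : 0 ≤ weight b r k := by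
  unfold weight; split_ifs <;> positivity

lemma sum_Ico_pow_weight (hb : 1 < b) (g : ℕ) :
    ∑ k ∈ Finset.Ico (b ^ g) (b ^ (g + 1)), weight b r k = ((b : ℝ) - 1) * ((b : ℝ) * r) ^ g := by
  have hconst : ∀ k ∈ Finset.Ico (b ^ g) (b ^ (g + 1)), weight b r k = r ^ g := by
    intro k hk
    rw [Finset.mem_Ico] at hk
    have hk0 : k ≠ 0 := (Nat.pow_pos (by omega : 0 < b)).trans_le hk.1 |>.ne'
    rw [weight, if_neg hk0, Nat.log_eq_of_pow_le_of_lt_pow hk.1 hk.2]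
  rw [Finset.sum_congr rfl hconst, Finset.sum_const, Nat.card_Ico, nsmul_eq_mul,
    Nat.cast_sub (Nat.pow_le_pow_right (by omega) g.le_succ)]
  push_cast
  rw [pow_succ]
  ring

lemma sum_range_pow_weight (hb : 1 < b) (n : ℕ) :
    ∑ k ∈ Finset.range (b ^ n), weight b r k =
      ((b : ℝ) - 1) * ∑ g ∈ Finset.range n, ((b : ℝ) * r) ^ g := by
  induction n with
  | zero => simp [weight]
  | succ n ih =>
    rw [← Finset.sum_range_add_sum_Ico _ (Nat.pow_le_pow_right (by omega) n.le_succ), ih,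
      sum_Ico_pow_weight hb, Finset.sum_range_succ, mul_add]

lemma sum_weight_le (hb : 1 < b) (hr : 0 ≤ r) (hbr : b * r < 1) (s : Finset ℕ) :
    ∑ k ∈ s, weight b r k ≤ (b - 1) / (1 - b * r) := by
  obtain ⟨n, hn⟩ := Finset.exists_nat_subset_range s
  have hsub : s ⊆ Finset.range (b ^ n) :=
    hn.trans (Finset.range_subset_range.mpr (Nat.lt_pow_self hb).le)
  have hgeom : ∑ g ∈ Finset.range n, ((b : ℝ) * r) ^ g ≤ (1 - b * r)⁻¹ :=
    sum_le_hasSum _ (fun g _ => by positivity) (hasSum_geometric_of_lt_one (by positivity) hbr)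
  have hb1 : (0 : ℝ) ≤ b - 1 := sub_nonneg.mpr (by exact_mod_cast hb.le)
  calc ∑ k ∈ s, weight b r k ≤ ∑ k ∈ Finset.range (b ^ n), weight b r k :=
        Finset.sum_le_sum_of_subset_of_nonneg hsub fun k _ _ => weight_nonneg hr k
    _ ≤ (b - 1) / (1 - b * r) := by
        rw [sum_range_pow_weight hb, div_eq_mul_inv]
        exact mul_le_mul_of_nonneg_left hgeom hb1

lemma weight_pow_mul (hb : 1 < b) (m t : ℕ) : weight b r (b ^ m * t) = r ^ m * weight b r t := by
  rcases Nat.eq_zero_or_pos t with rfl | ht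
  · simp [weight]
  have hmt : b ^ m * t ≠ 0 := (Nat.mul_pos (Nat.pow_pos (by omega : 0 < b)) ht).ne'
  have hm : m ≤ Nat.log b (b ^ m * t) := Nat.le_log_of_pow_le hb (Nat.le_mul_of_pos_right _ ht)
  have hlog : Nat.log b t = Nat.log b (b ^ m * t) - m := by
    rw [← Nat.log_div_base_pow, Nat.mul_div_cancel_left t (Nat.pow_pos (by omega : 0 < b))]
  rw [weight, weight, if_neg hmt, if_neg ht.ne', hlog, ← pow_add, Nat.add_sub_cancel' hm]

lemma sum_filter_pow_dvd_weight_le (hb : 1 < b) (hr : 0 ≤ r) (hbr : b * r < 1) (m : ℕ)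
    (s : Finset ℕ) :
    ∑ k ∈ s.filter (b ^ m ∣ ·), weight b r k ≤ r ^ m * ((b - 1) / (1 - b * r)) := by
  have hinj : Set.InjOn (b ^ m * ·) (s.image (· / b ^ m) : Set ℕ) := fun x _ y _ h =>
    Nat.eq_of_mul_eq_mul_left (Nat.pow_pos (by omega : 0 < b)) h
  have hsub : s.filter (b ^ m ∣ ·) ⊆ (s.image (· / b ^ m)).image (b ^ m * ·) := by
    intro k hk
    rw [Finset.mem_filter] at hk
    exact Finset.mem_image.mpr ⟨k / b ^ m, Finset.mem_image_of_mem _ hk.1, Nat.mul_div_cancel' hk.2⟩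
  calc ∑ k ∈ s.filter (b ^ m ∣ ·), weight b r k
      ≤ ∑ k ∈ (s.image (· / b ^ m)).image (b ^ m * ·), weight b r k :=
        Finset.sum_le_sum_of_subset_of_nonneg hsub fun k _ _ => weight_nonneg hr k
    _ = r ^ m * ∑ t ∈ s.image (· / b ^ m), weight b r t := by
        rw [Finset.sum_image hinj, Finset.mul_sum]
        exact Finset.sum_congr rfl fun t _ => weight_pow_mul hb m t
    _ ≤ r ^ m * ((b - 1) / (1 - b * r)) :=
        mul_le_mul_of_nonneg_left (sum_weight_le hb hr hbr _) (by positivity)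

end Weight

lemma sum_pi_prod_le {ι : Type*} [Fintype ι] {f : ℕ → ℝ} {C : ℝ} (hf : 0 ≤ f)
    (hfC : ∀ s, ∑ k ∈ s, f k ≤ C) (s : Finset (ι → ℕ)) :
    ∑ κ ∈ s, ∏ j, f (κ j) ≤ C ^ Fintype.card ι := by
  set t := s.biUnion fun κ => Finset.univ.image κ
  have hsub : s ⊆ Fintype.piFinset fun _ => t := fun κ hκ => Fintype.mem_piFinset.mpr fun j =>
    Finset.mem_biUnion.mpr ⟨κ, hκ, Finset.mem_image_of_mem κ (Finset.mem_univ j)⟩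
  calc ∑ κ ∈ s, ∏ j, f (κ j) ≤ ∑ κ ∈ Fintype.piFinset fun _ => t, ∏ j, f (κ j) :=
        Finset.sum_le_sum_of_subset_of_nonneg hsub fun κ _ _ => Finset.prod_nonneg fun j _ => hf _
    _ = ∏ _j : ι, ∑ k ∈ t, f k := (Finset.prod_univ_sum _ _).symm
    _ ≤ ∏ _j : ι, C := Finset.prod_le_prod (fun j _ => Finset.sum_nonneg fun k _ => hf k)
        fun j _ => hfC t
    _ = C ^ Fintype.card ι := by rw [Finset.prod_const, Finset.card_univ]

lemma sum_tsum_prod_mul_ite_le {α ι : Type*} [Fintype ι] (R : Finset α) {f : ℕ → ℝ} {C : ℝ}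
    (hf : 0 ≤ f) (hfC : ∀ s, ∑ k ∈ s, f k ≤ C) (P : α → (ι → ℕ) → ℕ → Prop)
    (hP : ∀ κ s, ∑ a ∈ R, ∑ k ∈ s, (if P a κ k then f k else 0) ≤ C) :
    ∑ a ∈ R, ∑' x : (ι → ℕ) × ℕ, (∏ j, f (x.1 j)) * (if P a x.1 x.2 then f x.2 else 0) ≤
      C ^ Fintype.card ι * C := by
  have hC : 0 ≤ C := by simpa using hfC ∅
  have hprod (κ : ι → ℕ) : 0 ≤ ∏ j, f (κ j) := Finset.prod_nonneg fun j _ => hf _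
  have hite (a κ k) : 0 ≤ if P a κ k then f k else 0 := by split_ifs; exacts [hf k, le_rfl]
  have hsummable (a : α) : Summable fun x : (ι → ℕ) × ℕ =>
      (∏ j, f (x.1 j)) * (if P a x.1 x.2 then f x.2 else 0) := by
    refine (Summable.mul_of_nonneg (summable_of_sum_le hprod (sum_pi_prod_le hf hfC))
      (summable_of_sum_le hf hfC) hprod hf).of_nonneg_of_le
      (fun x => mul_nonneg (hprod _) (hite _ _ _)) fun x => ?_
    refine mul_le_mul_of_nonneg_left ?_ (hprod _)
    split_ifs; exacts [le_rfl, hf x.2]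
  rw [← Summable.tsum_finsetSum fun a _ => hsummable a]
  refine tsum_le_of_sum_le' (by positivity) fun T => ?_
  have hsub : T ⊆ T.image Prod.fst ×ˢ T.image Prod.snd := fun x hx =>
    Finset.mem_product.mpr ⟨Finset.mem_image_of_mem _ hx, Finset.mem_image_of_mem _ hx⟩
  calc ∑ x ∈ T, ∑ a ∈ R, (∏ j, f (x.1 j)) * (if P a x.1 x.2 then f x.2 else 0)
      ≤ ∑ x ∈ T.image Prod.fst ×ˢ T.image Prod.snd,
          ∑ a ∈ R, (∏ j, f (x.1 j)) * (if P a x.1 x.2 then f x.2 else 0) :=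
        Finset.sum_le_sum_of_subset_of_nonneg hsub fun x _ _ =>
          Finset.sum_nonneg fun a _ => mul_nonneg (hprod _) (hite _ _ _)
    _ = ∑ κ ∈ T.image Prod.fst, (∏ j, f (κ j)) *
          ∑ a ∈ R, ∑ k ∈ T.image Prod.snd, (if P a κ k then f k else 0) := by
        rw [Finset.sum_product]
        refine Finset.sum_congr rfl fun κ _ => ?_
        simp_rw [Finset.mul_sum]
        exact Finset.sum_comm
    _ ≤ ∑ κ ∈ T.image Prod.fst, (∏ j, f (κ j)) * C :=
        Finset.sum_le_sum fun κ _ => mul_le_mul_of_nonneg_left (hP κ _) (hprod κ)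
    _ ≤ C ^ Fintype.card ι * C := by
        rw [← Finset.sum_mul]
        exact mul_le_mul_of_nonneg_right (sum_pi_prod_le hf hfC _) hC

lemma sum_Rfin_sum_ite_dvd_le {b : ℕ} [Fact b.Prime] {m : ℕ} {p : Polynomial (ZMod b)}
    (hp : Irreducible p) (hdeg : p.degree = m) {r : ℝ} (hr : 0 ≤ r) (hbr : b * r < 1)
    (S : Polynomial (ZMod b)) (s : Finset ℕ) :
    ∑ qt ∈ Rfin b m, ∑ k ∈ s, (if p ∣ S + trunc b m k * qt then weight b r k else 0) ≤
      (b - 1) / (1 - b * r) := by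
  have hb : 1 < b := (Fact.out : b.Prime).one_lt
  have hpp : Prime p := hp.prime
  have hR (q) (hq : q ∈ Rfin b m) : q ≠ 0 ∧ q.degree < p.degree :=
    hdeg ▸ ne_zero_and_degree_lt_of_mem_Rfin (by omega) hq
  have hcount (k : ℕ) : ∑ qt ∈ Rfin b m, (if p ∣ S + trunc b m k * qt then weight b r k else 0) =
      ((Rfin b m).filter fun qt => p ∣ S + trunc b m k * qt).card * weight b r k := by
    rw [← Finset.sum_filter, Finset.sum_const, nsmul_eq_mul]
  rw [Finset.sum_comm]
  simp_rw [hcount]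
  by_cases hS : p ∣ S
  · have hterm (k : ℕ) : (((Rfin b m).filter fun qt => p ∣ S + trunc b m k * qt).card : ℝ) *
        weight b r k ≤ if b ^ m ∣ k then ((b ^ m - 1 : ℕ) : ℝ) * weight b r k else 0 := by
      split_ifs with hk
      · exact mul_le_mul_of_nonneg_right
          (by exact_mod_cast (Finset.card_filter_le _ _).trans (card_Rfin_le b m))
          (weight_nonneg hr k)
      · have ht : ¬ p ∣ trunc b m k := Polynomial.not_dvd_of_degree_lt
          (mt (trunc_eq_zero_iff (by omega) m k).mp hk) (hdeg ▸ degree_trunc_lt b m k)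
        rw [Finset.filter_false_of_mem fun q hq =>
          not_dvd_add_mul hpp hS ht (hR q hq).1 (hR q hq).2]
        simp
    have hbm : ((b ^ m - 1 : ℕ) : ℝ) * r ^ m ≤ 1 := by
      calc ((b ^ m - 1 : ℕ) : ℝ) * r ^ m ≤ (b : ℝ) ^ m * r ^ m := by
            gcongr
            exact_mod_cast Nat.sub_le _ _
        _ = ((b : ℝ) * r) ^ m := (mul_pow _ _ _).symm
        _ ≤ 1 := pow_le_one₀ (by positivity) hbr.le
    have hW : (0 : ℝ) ≤ (b - 1) / (1 - b * r) := by simpa using sum_weight_le hb hr hbr ∅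
    calc _ ≤ ∑ k ∈ s, if b ^ m ∣ k then ((b ^ m - 1 : ℕ) : ℝ) * weight b r k else 0 :=
          Finset.sum_le_sum fun k _ => hterm k
      _ = ((b ^ m - 1 : ℕ) : ℝ) * ∑ k ∈ s.filter (b ^ m ∣ ·), weight b r k := by
          rw [Finset.sum_filter, Finset.mul_sum]
          exact Finset.sum_congr rfl fun k _ => by split_ifs <;> simp
      _ ≤ ((b ^ m - 1 : ℕ) : ℝ) * (r ^ m * ((b - 1) / (1 - b * r))) := by
          gcongr
          exact sum_filter_pow_dvd_weight_le hb hr hbr m s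
      _ ≤ (b - 1) / (1 - b * r) := by
          rw [← mul_assoc]
          exact mul_le_of_le_one_left hW hbm
  · calc _ ≤ ∑ k ∈ s, weight b r k := Finset.sum_le_sum fun k _ =>
          mul_le_of_le_one_left (weight_nonneg hr k)
            (by exact_mod_cast card_filter_dvd_add_mul_le_one hpp hS fun q hq => (hR q hq).2)
      _ ≤ (b - 1) / (1 - b * r) := sum_weight_le hb hr hbr s

lemma rpow_neg_mul_log_eq_weight (b : ℕ) (c : ℝ) {k : ℕ} (hk : 1 ≤ k) :
    (b : ℝ) ^ (-(c * Nat.log b k)) = weight b ((b : ℝ) ^ (-c)) k := by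
  rw [weight, if_neg (by omega), ← Real.rpow_mul_natCast (Nat.cast_nonneg b), neg_mul]

lemma ite_prod_rpow_eq_prod_weight {ι : Type*} [Fintype ι] (b : ℕ) (c : ℝ) (κ : ι → ℕ) (k : ℕ)
    (D : Prop) [Decidable D] :
    (if (∀ j, 1 ≤ κ j) ∧ 1 ≤ k ∧ D
      then (∏ j, (b : ℝ) ^ (-(c * Nat.log b (κ j)))) * (b : ℝ) ^ (-(c * Nat.log b k)) else 0) =
      (∏ j, weight b ((b : ℝ) ^ (-c)) (κ j)) * if D then weight b ((b : ℝ) ^ (-c)) k else 0 := by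
  by_cases hκ : ∀ j, 1 ≤ κ j
  · rw [Finset.prod_congr rfl fun j _ => rpow_neg_mul_log_eq_weight b c (hκ j)]
    rcases Nat.eq_zero_or_pos k with rfl | hk
    · simp [weight]
    · simp [hκ, show 1 ≤ k from hk, rpow_neg_mul_log_eq_weight b c hk]
  · obtain ⟨j, hj⟩ := not_forall.mp hκ
    rw [if_neg fun h => hj (h.1 j), Finset.prod_eq_zero (Finset.mem_univ j), zero_mul]
    simp [weight, show κ j = 0 by omega]

theorem statement9_general (b : ℕ) (hb : Nat.Prime b) (m : ℕ)
    (p : Polynomial (ZMod b)) (hp : Irreducible p) (hdeg : p.degree = (m : WithBot ℕ))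
    (a : ℕ)
    (lam : ℝ) (hlam1 : 1 / (2 * (a : ℝ) + 1) < lam)
    (u : Finset ℕ) (Q : ℕ → Polynomial (ZMod b)) :
    (1 / ((b : ℝ) ^ m - 1)) * ∑ qt ∈ Rfin b m,
        ∑' kk : (↥u → ℕ) × ℕ,
          (if (∀ j, 1 ≤ kk.1 j) ∧ 1 ≤ kk.2 ∧
              p ∣ ((∑ j, trunc b m (kk.1 j) * Q (j : ℕ)) + trunc b m kk.2 * qt)
           then (∏ j, (b : ℝ) ^ (-((2 * (a : ℝ) + 1) * lam * (Nat.log b (kk.1 j) : ℝ)))) *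
              (b : ℝ) ^ (-((2 * (a : ℝ) + 1) * lam * (Nat.log b kk.2 : ℝ)))
           else 0) ≤
      (((b : ℝ) - 1) / (((b : ℝ) ^ m - 1) * (1 - (b : ℝ) ^ ((1 : ℝ) - (2 * (a : ℝ) + 1) * lam)))) *
        (((b : ℝ) - 1) / (1 - (b : ℝ) ^ ((1 : ℝ) - (2 * (a : ℝ) + 1) * lam))) ^ u.card := by
  have : Fact b.Prime := ⟨hb⟩
  set c := (2 * (a : ℝ) + 1) * lam
  set r := (b : ℝ) ^ (-c)
  have hb1 : (1 : ℝ) < b := by exact_mod_cast hb.one_lt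
  have hc : 1 < c := by
    rw [one_div, inv_lt_iff_one_lt_mul₀ (by positivity), mul_comm] at hlam1
    exact hlam1
  have hbr : (b : ℝ) ^ (1 - c) = b * r := by
    rw [sub_eq_add_neg, Real.rpow_add (by positivity), Real.rpow_one]
  have hbr1 : b * r < 1 := hbr ▸ Real.rpow_lt_one_of_one_lt_of_neg hb1 (by linarith)
  simp_rw [ite_prod_rpow_eq_prod_weight, hbr]
  have hsum := sum_tsum_prod_mul_ite_le (Rfin b m) (weight_nonneg (b := b) (by positivity))
    (sum_weight_le hb.one_lt (by positivity) hbr1) _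
    fun κ s => sum_Rfin_sum_ite_dvd_le hp hdeg (by positivity) hbr1
      (∑ j : u, trunc b m (κ j) * Q j) s
  rw [Fintype.card_coe] at hsum
  calc _ ≤ 1 / ((b : ℝ) ^ m - 1) *
        (((b - 1) / (1 - b * r)) ^ u.card * ((b - 1) / (1 - b * r))) :=
        mul_le_mul_of_nonneg_left hsum
          (one_div_nonneg.mpr (sub_nonneg.mpr (one_le_pow₀ hb1.le)))
    _ = _ := by rw [← div_div]; ring

theorem statement9 (b : ℕ) (hb : Nat.Prime b) (m : ℕ) (hm : 1 ≤ m)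
    (p : Polynomial (ZMod b)) (hp : Irreducible p) (hdeg : p.degree = (m : WithBot ℕ))
    (a : ℕ) (ha : 1 ≤ a)
    (lam : ℝ) (hlam1 : 1 / (2 * (a : ℝ) + 1) < lam) (hlam2 : lam ≤ 1)
    (u : Finset ℕ) (Q : ℕ → Polynomial (ZMod b)) :
    (1 / ((b : ℝ) ^ m - 1)) * ∑ qt ∈ Rfin b m,
        ∑' kk : (↥u → ℕ) × ℕ,
          (if (∀ j, 1 ≤ kk.1 j) ∧ 1 ≤ kk.2 ∧
              p ∣ ((∑ j, trunc b m (kk.1 j) * Q (j : ℕ)) + trunc b m kk.2 * qt)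
           then (∏ j, (b : ℝ) ^ (-((2 * (a : ℝ) + 1) * lam * (Nat.log b (kk.1 j) : ℝ)))) *
              (b : ℝ) ^ (-((2 * (a : ℝ) + 1) * lam * (Nat.log b kk.2 : ℝ)))
           else 0) ≤
      (((b : ℝ) - 1) / (((b : ℝ) ^ m - 1) * (1 - (b : ℝ) ^ ((1 : ℝ) - (2 * (a : ℝ) + 1) * lam)))) *
        (((b : ℝ) - 1) / (1 - (b : ℝ) ^ ((1 : ℝ) - (2 * (a : ℝ) + 1) * lam))) ^ u.card :=
  statement9_general b hb m p hp hdeg a lam hlam1 u Q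

end ISPLR
end
end

section
/- Let b be a prime, m, s, d ∈ ℕ, p ∈ F_b[x] with deg(p) = m, q ∈ (F_b[x])^{ds}, and let α, α' be integers with 1 ≤ α ≤ α' ≤ d. Let γ = (γ_w) be nonnegative weights and define weights γ' = (γ'_w) by 4^{|w|(d-α')} γ'_w = (4^{|w|(d-α)} γ_w)^{(1+2α')/(1+2α)} for all finite w. Then B_{α',d,γ'}(q, p) ≤ B_{α,d,γ}(q, p)^{(1+2α')/(1+2α)}. -/
open scoped Classical
open Polynomial

noncomputable section

namespace Real

theorem tsum_rpow_le_rpow_tsum {ι : Type*} {f : ι → ℝ} (hf0 : ∀ i, 0 ≤ f i) (hf : Summable f)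
    {p : ℝ} (hp : 1 ≤ p) : ∑' i, f i ^ p ≤ (∑' i, f i) ^ p := by
  set S := ∑' i, f i
  have hS : 0 ≤ S := tsum_nonneg hf0
  have hbound : ∀ i, f i ^ p ≤ S ^ (p - 1) * f i := fun i => by
    calc f i ^ p = f i ^ (p - 1) * f i := by
          rw [← rpow_add_one' (hf0 i) (by linarith), sub_add_cancel]
      _ ≤ S ^ (p - 1) * f i := mul_le_mul_of_nonneg_right
          (rpow_le_rpow (hf0 i) (hf.le_tsum i fun j _ => hf0 j) (by linarith)) (hf0 i)
  calc ∑' i, f i ^ p ≤ ∑' i, S ^ (p - 1) * f i :=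
        Summable.tsum_le_tsum hbound
          ((hf.mul_left _).of_nonneg_of_le (fun i => rpow_nonneg (hf0 i) p) hbound)
          (hf.mul_left _)
    _ = S ^ p := by rw [tsum_mul_left, ← rpow_add_one' hS (by linarith), sub_add_cancel]

theorem sum_rpow_le_rpow_sum {ι : Type*} (s : Finset ι) {f : ι → ℝ} (hf0 : ∀ i ∈ s, 0 ≤ f i)
    {p : ℝ} (hp : 1 ≤ p) : ∑ i ∈ s, f i ^ p ≤ (∑ i ∈ s, f i) ^ p := by
  rw [← Finset.tsum_subtype s f, ← Finset.tsum_subtype s fun i => f i ^ p]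
  exact tsum_rpow_le_rpow_tsum (f := fun i : s => f i) (fun i => hf0 i i.2) .of_finite hp

end Real

theorem summable_prod_pi_of_nonneg {ι α : Type*} [Fintype ι] {f : ι → α → ℝ}
    (hf0 : ∀ i a, 0 ≤ f i a) (hf : ∀ i, Summable (f i)) :
    Summable fun k : ι → α => ∏ i, f i (k i) := by
  refine summable_of_sum_le (c := ∏ i, ∑' a, f i a)
    (fun k => Finset.prod_nonneg fun i _ => hf0 i (k i)) fun S => ?_
  let T : ι → Finset α := fun i => S.image (· i)
  calc ∑ k ∈ S, ∏ i, f i (k i) ≤ ∑ k ∈ Fintype.piFinset T, ∏ i, f i (k i) :=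
        Finset.sum_le_sum_of_subset_of_nonneg
          (fun k hk => Fintype.mem_piFinset.2 fun i => Finset.mem_image_of_mem _ hk)
          (fun k _ _ => Finset.prod_nonneg fun i _ => hf0 i (k i))
    _ = ∏ i, ∑ a ∈ T i, f i a := (Finset.prod_univ_sum T f).symm
    _ ≤ ∏ i, ∑' a, f i a := Finset.prod_le_prod (fun i _ => Finset.sum_nonneg fun a _ => hf0 i a)
        fun i _ => (hf i).sum_le_tsum _ fun a _ => hf0 i a

theorem tsum_ite_prod_rpow_le {ι : Type*} [Fintype ι] (P : (ι → ℕ) → Prop) [DecidablePred P]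
    {g : ℕ → ℝ} (hg0 : ∀ n, 0 ≤ g n) (hg : Summable g) {p : ℝ} (hp : 1 ≤ p) :
    ∑' k, (if P k then ∏ i, g (k i) ^ p else 0) ≤
      (∑' k, if P k then ∏ i, g (k i) else 0) ^ p := by
  have hprod : ∀ k : ι → ℕ, 0 ≤ ∏ i, g (k i) := fun k => Finset.prod_nonneg fun i _ => hg0 (k i)
  have hF0 : ∀ k, 0 ≤ if P k then ∏ i, g (k i) else 0 := fun k => by
    split_ifs
    exacts [hprod k, le_rfl]
  have hF : Summable fun k => if P k then ∏ i, g (k i) else 0 :=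
    (summable_prod_pi_of_nonneg (fun _ => hg0) fun _ => hg).of_nonneg_of_le hF0 fun k => by
      split_ifs
      exacts [le_rfl, hprod k]
  calc ∑' k, (if P k then ∏ i, g (k i) ^ p else 0)
      = ∑' k, (if P k then ∏ i, g (k i) else 0) ^ p := tsum_congr fun k => by
        split_ifs
        exacts [Real.finsetProd_rpow _ _ (fun i _ => hg0 (k i)) p,
          (Real.zero_rpow (by linarith)).symm]
    _ ≤ _ := Real.tsum_rpow_le_rpow_tsum hF0 hF hp

namespace ISPLR

theorem rfun_nonneg (b α d k : ℕ) : 0 ≤ rfun b α d k := by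
  unfold rfun
  split_ifs <;> positivity

theorem rfun_le_sq_div {b α d : ℕ} (hb : 2 ≤ b) (hαd : 1 ≤ min α d) (k : ℕ) :
    rfun b α d k ≤ (b : ℝ) ^ 2 / ((k : ℝ) + 1) ^ 2 := by
  rcases eq_or_ne k 0 with rfl | hk
  · rw [rfun, if_pos rfl, Nat.cast_zero, zero_add, one_pow, div_one]
    exact one_le_pow₀ (by exact_mod_cast hb.trans' one_le_two)
  have hkb : k + 1 ≤ b ^ (mu b k + 1) := Nat.lt_pow_succ_log_self (by omega) k
  have hnat : (k + 1) ^ 2 ≤ b ^ 2 * b ^ ((2 * min α d + 1) * mu b k) :=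
    calc (k + 1) ^ 2 ≤ (b ^ (mu b k + 1)) ^ 2 := Nat.pow_le_pow_left hkb 2
      _ = b ^ 2 * b ^ (2 * mu b k) := by ring
      _ ≤ b ^ 2 * b ^ ((2 * min α d + 1) * mu b k) :=
          Nat.mul_le_mul_left _ (Nat.pow_le_pow_right (by omega) (by nlinarith))
  rw [rfun, if_neg hk, zpow_neg, zpow_natCast, le_div_iff₀ (by positivity), inv_mul_eq_div,
    div_le_iff₀ (by positivity)]
  exact_mod_cast hnat

theorem summable_rfun {b α d : ℕ} (hb : 2 ≤ b) (hαd : 1 ≤ min α d) : Summable (rfun b α d) := by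
  have hsq : Summable fun k : ℕ => (b : ℝ) ^ 2 * (1 / ((k + 1 : ℕ) : ℝ) ^ 2) :=
    ((summable_nat_add_iff 1).2 (Real.summable_one_div_nat_pow.2 one_lt_two)).mul_left _
  refine hsq.of_nonneg_of_le (rfun_nonneg b α d) fun k => (rfun_le_sq_div hb hαd k).trans_eq ?_
  push_cast
  ring

theorem rfun_eq_rpow {α α' d : ℕ} (hαd : α ≤ d) (hα'd : α' ≤ d) (b k : ℕ) :
    rfun b α' d k = rfun b α d k ^ ((1 + 2 * (α' : ℝ)) / (1 + 2 * (α : ℝ))) := by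
  unfold rfun
  split_ifs
  · rw [Real.one_rpow]
  rw [← Real.rpow_intCast, ← Real.rpow_intCast, ← Real.rpow_mul (Nat.cast_nonneg b),
    min_eq_left hαd, min_eq_left hα'd]
  congr 1
  push_cast
  field_simp
  ring

def latticeSum (b α d m : ℕ) (p : Polynomial (ZMod b)) (q : ℕ → Polynomial (ZMod b))
    (u : Finset ℕ) : ℝ :=
  ∑' k : ↥u → ℕ,
    (if (∀ j, 1 ≤ k j) ∧ p ∣ ∑ j, trunc b m (k j) * q (j : ℕ)
     then ∏ j, rfun b α d (k j) else 0)

theorem Bcrit_eq_sum_latticeSum (b α d m : ℕ) (γ : Finset ℕ → ℝ) (p : Polynomial (ZMod b))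
    (τ : ℕ) (q : ℕ → Polynomial (ZMod b)) :
    Bcrit b α d m γ p τ q = ∑ u ∈ (Finset.Icc 1 τ).powerset.filter fun u => u ≠ ∅,
      (4 : ℝ) ^ ((blk d u).card * (d - α)) * γ (blk d u) * latticeSum b α d m p q u :=
  rfl

theorem latticeSum_nonneg (b α d m : ℕ) (p : Polynomial (ZMod b))
    (q : ℕ → Polynomial (ZMod b)) (u : Finset ℕ) : 0 ≤ latticeSum b α d m p q u :=
  tsum_nonneg fun k => by
    split_ifs
    exacts [Finset.prod_nonneg fun j _ => rfun_nonneg b α d (k j), le_rfl]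

theorem one_le_smoothness_exponent {α α' : ℕ} (hαα' : α ≤ α') :
    1 ≤ (1 + 2 * (α' : ℝ)) / (1 + 2 * (α : ℝ)) :=
  (one_le_div (by positivity)).2 (by gcongr)

theorem latticeSum_le_rpow {b α α' d : ℕ} (hb : 2 ≤ b) (hα : 1 ≤ α) (hαα' : α ≤ α')
    (hα'd : α' ≤ d) (m : ℕ) (p : Polynomial (ZMod b)) (q : ℕ → Polynomial (ZMod b))
    (u : Finset ℕ) :
    latticeSum b α' d m p q u ≤
      latticeSum b α d m p q u ^ ((1 + 2 * (α' : ℝ)) / (1 + 2 * (α : ℝ))) := by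
  have hαd : α ≤ d := hαα'.trans hα'd
  simp only [latticeSum, rfun_eq_rpow hαd hα'd]
  exact tsum_ite_prod_rpow_le _ (rfun_nonneg b α d) (summable_rfun hb (le_min hα (hα.trans hαd)))
    (one_le_smoothness_exponent hαα')

theorem statement12_general (b : ℕ) (hb : Nat.Prime b) (m s d α α' : ℕ)
    (hα : 1 ≤ α) (hαα' : α ≤ α') (hα'd : α' ≤ d)
    (p : Polynomial (ZMod b))
    (q : ℕ → Polynomial (ZMod b))
    (γ γ' : Finset ℕ → ℝ) (hγ : ∀ w, 0 ≤ γ w)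
    (hγ' : ∀ w : Finset ℕ,
      (4 : ℝ) ^ (w.card * (d - α')) * γ' w =
        ((4 : ℝ) ^ (w.card * (d - α)) * γ w) ^ ((1 + 2 * (α' : ℝ)) / (1 + 2 * (α : ℝ)))) :
    Bcrit b α' d m γ' p (d * s) q ≤
      Bcrit b α d m γ p (d * s) q ^ ((1 + 2 * (α' : ℝ)) / (1 + 2 * (α : ℝ))) := by
  have hweight : ∀ w, 0 ≤ (4 : ℝ) ^ (w.card * (d - α)) * γ w := fun w => by
    have := hγ w
    positivity
  rw [Bcrit_eq_sum_latticeSum, Bcrit_eq_sum_latticeSum]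
  refine (Finset.sum_le_sum fun u _ => ?_).trans (Real.sum_rpow_le_rpow_sum _
    (fun u _ => mul_nonneg (hweight _) (latticeSum_nonneg b α d m p q u))
    (one_le_smoothness_exponent hαα'))
  rw [hγ', Real.mul_rpow (hweight _) (latticeSum_nonneg b α d m p q u)]
  exact mul_le_mul_of_nonneg_left (latticeSum_le_rpow hb.two_le hα hαα' hα'd m p q u)
    (Real.rpow_nonneg (hweight _) _)

theorem statement12 (b : ℕ) (hb : Nat.Prime b) (m s d α α' : ℕ)
    (hm : 1 ≤ m) (hs : 1 ≤ s)
    (hα : 1 ≤ α) (hαα' : α ≤ α') (hα'd : α' ≤ d)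
    (p : Polynomial (ZMod b)) (hdeg : p.degree = (m : WithBot ℕ))
    (q : ℕ → Polynomial (ZMod b))
    (γ γ' : Finset ℕ → ℝ) (hγ : ∀ w, 0 ≤ γ w)
    (hγ' : ∀ w : Finset ℕ,
      (4 : ℝ) ^ (w.card * (d - α')) * γ' w =
        ((4 : ℝ) ^ (w.card * (d - α)) * γ w) ^ ((1 + 2 * (α' : ℝ)) / (1 + 2 * (α : ℝ)))) :
    Bcrit b α' d m γ' p (d * s) q ≤
      Bcrit b α d m γ p (d * s) q ^ ((1 + 2 * (α' : ℝ)) / (1 + 2 * (α : ℝ))) :=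
  statement12_general b hb m s d α α' hα hαα' hα'd p q γ γ' hγ hγ'

end ISPLR
end
end
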